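/- arXiv:1908.00113 — 2 statements merged into one kernel-verified Lean document; each statement's English description precedes it below -/
import Mathlib

section
/- The subdominant ultrametric operation is 1-Lipschitz in the $L_\infty$ norm: if $M, N$ are valid matrices with equal diagonals and $\|M - N\|_\infty \le \varepsilon$, then $\|\widehat{M} - \widehat{N}\|_\infty \le \varepsilon$, where $\widehat{M}_{ij}$ is the minimax path cost between $i$ and $j$ using edge costs $M$. -/
def ValidM {n : ℕ} (M : Fin n → Fin n → ℝ) : Prop :=
  (∀ i j, M i j = M j i) ∧ (∀ i j, M i i ≤ M i j)

noncomputable def linf {n : ℕ} (A B : Fin (n + 1) → Fin (n + 1) → ℝ) : ℝ :=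
  Finset.univ.sup' Finset.univ_nonempty
    (fun p : Fin (n + 1) × Fin (n + 1) => |A p.1 p.2 - B p.1 p.2|)

def pathCost {n : ℕ} (M : Fin n → Fin n → ℝ) : Fin n → List (Fin n) → Fin n → ℝ
  | i, [], j => M i j
  | i, v :: l, j => max (M i v) (pathCost M v l j)

noncomputable def subUltra {n : ℕ} (M : Fin n → Fin n → ℝ) (i j : Fin n) : ℝ :=
  if i = j then M i i else sInf (Set.range fun l : List (Fin n) => pathCost M i l j)

lemma pathCost_diff {n : ℕ} (M N : Fin n → Fin n → ℝ) (ε : ℝ)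
    (hε : ∀ i j, |M i j - N i j| ≤ ε) :
    ∀ (l : List (Fin n)) (i j : Fin n), pathCost M i l j ≤ pathCost N i l j + ε := by
  intro l
  induction l with
  | nil =>
    intro i j
    have := hε i j
    have := abs_le.mp this
    simp [pathCost]; linarith [this.2]
  | cons v l ih =>
    intro i j
    have h1 : M i v ≤ N i v + ε := by
      have := (abs_le.mp (hε i v)).2; linarith
    have h2 := ih v j
    simp only [pathCost]
    exact max_le (le_trans h1 (by gcongr; exact le_max_left _ _))
      (le_trans h2 (by gcongr; exact le_max_right _ _))

lemma pathCost_lb {n : ℕ} (M : Fin n → Fin n → ℝ) (hM : ValidM M) :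
    ∀ (l : List (Fin n)) (i j : Fin n), M i i ≤ pathCost M i l j := by
  intro l i j
  cases l with
  | nil => exact hM.2 i j
  | cons v l => exact le_trans (hM.2 i v) (le_max_left _ _)

lemma subUltra_diff {n : ℕ} (M N : Fin n → Fin n → ℝ) (hM : ValidM M) (hN : ValidM N)
    (hdiag : ∀ i, M i i = N i i) (ε : ℝ) (hε : ∀ i j, |M i j - N i j| ≤ ε)
    (i j : Fin n) : subUltra M i j ≤ subUltra N i j + ε := by
  unfold subUltra
  by_cases hij : i = j
  · simp [hij, hdiag j]
    have := hε j j
    have h0 : (0:ℝ) ≤ ε := le_trans (abs_nonneg _) this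
    linarith
  · simp only [if_neg hij]
    have hne : (Set.range fun l : List (Fin n) => pathCost N i l j).Nonempty :=
      ⟨_, ⟨[], rfl⟩⟩
    have hbdd : BddBelow (Set.range fun l : List (Fin n) => pathCost M i l j) :=
      ⟨M i i, by rintro x ⟨l, rfl⟩; exact pathCost_lb M hM l i j⟩
    have key : sInf (Set.range fun l : List (Fin n) => pathCost M i l j) - ε ≤
        sInf (Set.range fun l : List (Fin n) => pathCost N i l j) := by
      apply le_csInf hne
      rintro x ⟨l, rfl⟩
      have h1 : sInf (Set.range fun l : List (Fin n) => pathCost M i l j) ≤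
          pathCost M i l j := csInf_le hbdd ⟨l, rfl⟩
      have h2 := pathCost_diff M N ε hε l i j
      linarith
    linarith

/-- The subdominant ultrametric operation is 1-Lipschitz in the `L∞` norm on valid matrices
with equal diagonals. -/
theorem subdominant_ultrametric_lipschitz {n : ℕ}
    (M N : Fin (n + 1) → Fin (n + 1) → ℝ) (hM : ValidM M) (hN : ValidM N)
    (hdiag : ∀ i, M i i = N i i) (ε : ℝ) (h : linf M N ≤ ε) :
    linf (subUltra M) (subUltra N) ≤ ε := by
  have hε : ∀ i j, |M i j - N i j| ≤ ε := by
    intro i j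
    exact le_trans (Finset.le_sup' (f := fun p : Fin (n+1) × Fin (n+1) =>
      |M p.1 p.2 - N p.1 p.2|) (Finset.mem_univ (i, j))) h
  apply Finset.sup'_le
  rintro ⟨i, j⟩ _
  rw [abs_le]
  constructor
  · have := subUltra_diff N M hN hM (fun i => (hdiag i).symm) ε
      (fun i j => by rw [abs_sub_comm]; exact hε i j) i j
    linarith
  · have := subUltra_diff M N hM hN hdiag ε hε i j
    linarith
end

section
/- Suppose $M^1$ and $M^2$ are ultra matrices with equal diagonals. Then the subdominant ultrametrics $\widehat{M^\lambda}$ of the convex combinations $M^\lambda = (1-\lambda)M^1 + \lambda M^2$ form a geodesic in the space of ultra matrices with the $L_\infty$ metric: $\|\widehat{M^\lambda} - \widehat{M^\mu}\|_\infty = |\lambda - \mu| \cdot \|M^1 - M^2\|_\infty$ for all $\lambda, \mu \in [0,1]$, noting $\widehat{M^0} = M^1$ and $\widehat{M^1} = M^2$. -/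
def UltraM {n : ℕ} (M : Fin n → Fin n → ℝ) : Prop :=
  ValidM M ∧ ∀ i j k, M i j ≤ max (M i k) (M k j)

/-!
The entrywise sup distance `linf` is the sup-norm distance on matrices, and `subUltra` is
1-Lipschitz for it: each path cost is a maximum of entries, and an infimum of 1-Lipschitz
functions is 1-Lipschitz. As `subUltra` fixes ultra matrices, `λ ↦ subUltra (M^λ)` runs from `M₁`
to `M₂` and, like the segment `λ ↦ M^λ`, is `‖M₁ - M₂‖`-Lipschitz. A path on `[0, 1]` that is
Lipschitz with constant the distance of its endpoints is a geodesic: a shortcut between `γ λ`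
and `γ μ` would, by the triangle inequality, bring the endpoints closer than they are.
-/

open Set

lemma dist_eq_abs_sub_mul_of_dist_le {X : Type*} [PseudoMetricSpace X] {γ : ℝ → X}
    (hγ : ∀ s ∈ Icc (0 : ℝ) 1, ∀ t ∈ Icc (0 : ℝ) 1,
      dist (γ s) (γ t) ≤ |s - t| * dist (γ 0) (γ 1))
    {s t : ℝ} (hs : s ∈ Icc (0 : ℝ) 1) (ht : t ∈ Icc (0 : ℝ) 1) :
    dist (γ s) (γ t) = |s - t| * dist (γ 0) (γ 1) := by
  wlog hst : s ≤ t generalizing s t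
  · rw [dist_comm, abs_sub_comm]
    exact this ht hs (le_of_not_ge hst)
  have h0 : (0 : ℝ) ∈ Icc (0 : ℝ) 1 := left_mem_Icc.2 zero_le_one
  have h1 : (1 : ℝ) ∈ Icc (0 : ℝ) 1 := right_mem_Icc.2 zero_le_one
  have hs0 := hγ 0 h0 s hs
  have ht1 := hγ t ht 1 h1
  rw [zero_sub, abs_neg, abs_of_nonneg hs.1] at hs0
  rw [abs_sub_comm, abs_of_nonneg (sub_nonneg.2 ht.2)] at ht1
  refine le_antisymm (hγ s hs t ht) ?_
  rw [abs_sub_comm, abs_of_nonneg (sub_nonneg.2 hst)]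
  nlinarith [dist_triangle4 (γ 0) (γ s) (γ t) (γ 1)]

section iInf

variable {ι : Type*} {f g : ι → ℝ} {D : ℝ}

lemma bddBelow_range_of_le_add (hf : BddBelow (range f)) (h : ∀ i, f i ≤ g i + D) :
    BddBelow (range g) := by
  obtain ⟨b, hb⟩ := hf
  exact ⟨b - D, by rintro _ ⟨i, rfl⟩; linarith [hb ⟨i, rfl⟩, h i]⟩

lemma ciInf_sub_le_ciInf [Nonempty ι] (hf : BddBelow (range f)) (h : ∀ i, f i ≤ g i + D) :
    (⨅ i, f i) - D ≤ ⨅ i, g i :=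
  le_ciInf fun i => by linarith [ciInf_le hf i, h i]

lemma abs_ciInf_sub_ciInf_le [Nonempty ι] (h : ∀ i, |f i - g i| ≤ D) :
    |(⨅ i, f i) - ⨅ i, g i| ≤ D := by
  have hfg : ∀ i, f i ≤ g i + D := fun i => by linarith [(abs_le.1 (h i)).2]
  have hgf : ∀ i, g i ≤ f i + D := fun i => by linarith [(abs_le.1 (h i)).1]
  by_cases hf : BddBelow (range f)
  · have hg := bddBelow_range_of_le_add hf hfg
    rw [abs_sub_le_iff]
    constructor <;> linarith [ciInf_sub_le_ciInf hf hfg, ciInf_sub_le_ciInf hg hgf]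
  · have hg : ¬BddBelow (range g) := fun hg => hf (bddBelow_range_of_le_add hg hgf)
    rw [Real.iInf_of_not_bddBelow hf, Real.iInf_of_not_bddBelow hg, sub_self, abs_zero]
    exact (abs_nonneg _).trans (h (Classical.arbitrary ι))

end iInf

section Matrix

lemma abs_sub_le_dist_of_pi_pi {ι κ : Type*} [Fintype ι] [Fintype κ] (A B : ι → κ → ℝ)
    (i : ι) (j : κ) : |A i j - B i j| ≤ dist A B := by
  rw [← Real.dist_eq]
  exact (dist_le_pi_dist (A i) (B i) j).trans (dist_le_pi_dist A B i)

lemma dist_le_of_forall_abs_sub_le {ι κ : Type*} [Fintype ι] [Fintype κ] {A B : ι → κ → ℝ}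
    {D : ℝ} (hD : 0 ≤ D) (h : ∀ i j, |A i j - B i j| ≤ D) : dist A B ≤ D :=
  (dist_pi_le_iff hD).2 fun i => (dist_pi_le_iff hD).2 fun j =>
    (Real.dist_eq _ _).trans_le (h i j)

variable {n : ℕ}

lemma linf_eq_dist (A B : Fin (n + 1) → Fin (n + 1) → ℝ) : linf A B = dist A B := by
  have hentry : ∀ i j, |A i j - B i j| ≤ linf A B := fun i j =>
    Finset.le_sup' (fun p : Fin (n + 1) × Fin (n + 1) => |A p.1 p.2 - B p.1 p.2|)
      (Finset.mem_univ (i, j))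
  exact le_antisymm (Finset.sup'_le _ _ fun p _ => abs_sub_le_dist_of_pi_pi A B p.1 p.2)
    (dist_le_of_forall_abs_sub_le ((abs_nonneg _).trans (hentry 0 0)) hentry)

lemma abs_pathCost_sub_pathCost_le {A B : Fin n → Fin n → ℝ} {D : ℝ}
    (h : ∀ i j, |A i j - B i j| ≤ D) :
    ∀ (i : Fin n) (l : List (Fin n)) (j : Fin n), |pathCost A i l j - pathCost B i l j| ≤ D
  | i, [], j => h i j
  | i, v :: l, j =>
    (abs_max_sub_max_le_max _ _ _ _).trans
      (max_le (h i v) (abs_pathCost_sub_pathCost_le h v l j))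

lemma abs_subUltra_sub_subUltra_le {A B : Fin n → Fin n → ℝ} {D : ℝ}
    (h : ∀ i j, |A i j - B i j| ≤ D) (i j : Fin n) :
    |subUltra A i j - subUltra B i j| ≤ D := by
  unfold subUltra
  split_ifs
  · exact h i i
  · exact abs_ciInf_sub_ciInf_le (abs_pathCost_sub_pathCost_le h i · j)

lemma dist_subUltra_le (A B : Fin n → Fin n → ℝ) :
    dist (subUltra A) (subUltra B) ≤ dist A B :=
  dist_le_of_forall_abs_sub_le dist_nonneg
    (abs_subUltra_sub_subUltra_le (abs_sub_le_dist_of_pi_pi A B))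

lemma le_pathCost {M : Fin n → Fin n → ℝ} (hM : ∀ i j k, M i j ≤ max (M i k) (M k j)) :
    ∀ (i : Fin n) (l : List (Fin n)) (j : Fin n), M i j ≤ pathCost M i l j
  | _, [], _ => le_rfl
  | i, v :: l, j => (hM i j v).trans (max_le_max le_rfl (le_pathCost hM v l j))

lemma subUltra_eq_self {M : Fin n → Fin n → ℝ} (hM : ∀ i j k, M i j ≤ max (M i k) (M k j)) :
    subUltra M = M := by
  funext i j
  unfold subUltra
  split_ifs with hij
  · rw [hij]
  · have hbdd : BddBelow (range fun l => pathCost M i l j) :=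
      ⟨M i j, by rintro _ ⟨l, rfl⟩; exact le_pathCost hM i l j⟩
    exact le_antisymm (csInf_le hbdd ⟨[], rfl⟩)
      (le_csInf ⟨_, [], rfl⟩ (by rintro _ ⟨l, rfl⟩; exact le_pathCost hM i l j))

lemma convexComb_eq_lineMap (M₁ M₂ : Fin n → Fin n → ℝ) (t : ℝ) :
    (fun i j => (1 - t) * M₁ i j + t * M₂ i j) = AffineMap.lineMap M₁ M₂ t := by
  funext i j
  simp [AffineMap.lineMap_apply_module]

end Matrix

theorem subdominant_geodesic_general {n : ℕ} (M₁ M₂ : Fin (n + 1) → Fin (n + 1) → ℝ)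
    (h₁ : UltraM M₁) (h₂ : UltraM M₂) :
    (∀ lam mu : ℝ, lam ∈ Set.Icc (0 : ℝ) 1 → mu ∈ Set.Icc (0 : ℝ) 1 →
      linf (subUltra fun i j => (1 - lam) * M₁ i j + lam * M₂ i j)
          (subUltra fun i j => (1 - mu) * M₁ i j + mu * M₂ i j)
        = |lam - mu| * linf M₁ M₂) ∧
    (subUltra fun i j => (1 - (0 : ℝ)) * M₁ i j + (0 : ℝ) * M₂ i j) = M₁ ∧
    (subUltra fun i j => (1 - (1 : ℝ)) * M₁ i j + (1 : ℝ) * M₂ i j) = M₂ := by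
  simp only [convexComb_eq_lineMap, linf_eq_dist]
  have hstart : subUltra (AffineMap.lineMap M₁ M₂ (0 : ℝ)) = M₁ := by
    rw [AffineMap.lineMap_apply_zero, subUltra_eq_self h₁.2]
  have hend : subUltra (AffineMap.lineMap M₁ M₂ (1 : ℝ)) = M₂ := by
    rw [AffineMap.lineMap_apply_one, subUltra_eq_self h₂.2]
  refine ⟨fun lam mu hlam hmu => ?_, hstart, hend⟩
  have hlip : ∀ s ∈ Icc (0 : ℝ) 1, ∀ t ∈ Icc (0 : ℝ) 1,
      dist (subUltra (AffineMap.lineMap M₁ M₂ s)) (subUltra (AffineMap.lineMap M₁ M₂ t))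
        ≤ |s - t| * dist M₁ M₂ := fun s _ t _ =>
    (dist_subUltra_le _ _).trans_eq (by rw [dist_lineMap_lineMap, Real.dist_eq])
  have hgeod :=
    dist_eq_abs_sub_mul_of_dist_le (γ := fun t => subUltra (AffineMap.lineMap M₁ M₂ t))
    (by simpa only [hstart, hend] using hlip) hlam hmu
  simpa only [hstart, hend] using hgeod

/-- For ultra matrices `M₁, M₂` with equal diagonals, the subdominant ultrametrics of the
convex combinations `M^λ = (1-λ)M₁ + λM₂` form a geodesic in the space of ultra matrices
with the `L∞` metric, with endpoints `M₁` and `M₂`. -/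
theorem subdominant_geodesic {n : ℕ} (M₁ M₂ : Fin (n + 1) → Fin (n + 1) → ℝ)
    (h₁ : UltraM M₁) (h₂ : UltraM M₂) (hdiag : ∀ i, M₁ i i = M₂ i i) :
    (∀ lam mu : ℝ, lam ∈ Set.Icc (0 : ℝ) 1 → mu ∈ Set.Icc (0 : ℝ) 1 →
      linf (subUltra fun i j => (1 - lam) * M₁ i j + lam * M₂ i j)
          (subUltra fun i j => (1 - mu) * M₁ i j + mu * M₂ i j)
        = |lam - mu| * linf M₁ M₂) ∧
    (subUltra fun i j => (1 - (0 : ℝ)) * M₁ i j + (0 : ℝ) * M₂ i j) = M₁ ∧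
    (subUltra fun i j => (1 - (1 : ℝ)) * M₁ i j + (1 : ℝ) * M₂ i j) = M₂ :=
  subdominant_geodesic_general M₁ M₂ h₁ h₂
end
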